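/- arXiv:1501.00793 — 2 statements merged into one kernel-verified Lean document; each statement's English description precedes it below -/
import Mathlib

section
/- Let λ₁,λ₂,λ₃,λ₄ and λ̄₁,λ̄₂,λ̄₃,λ̄₄ be positive reals and let a,b,c,d be real numbers. Suppose A,B,C,D : [0,∞) → (0,∞) are differentiable and satisfy dA/dt = B/D, dB/dt = -B²/(AD), dC/dt = 0, dD/dt = 3 + B/A with A(0)=λ₁, B(0)=λ₂, C(0)=λ₃, D(0)=λ₄, with A(t) → ∞ and D(t) → ∞ as t → ∞; let Ā,B̄,C̄,D̄ satisfy the same ODE system with initial data λ̄₁,λ̄₂,λ̄₃,λ̄₄ and with Ā(t) → ∞, D̄(t) → ∞. Then the quantity ((A-Ā-a²B̄)/A)² + ((B-B̄)/B)² + ((C-C̄)/C)² + ((b²Ā+c²B̄+d²C̄+D̄-D)/D)² + 2(aB̄)²/(AB) + 2(bĀ+acB̄)²/(AD) + 2(cB̄)²/(BD) + 2(dC̄)²/(CD) tends to 0 as t → ∞ if and only if λ̄₁λ̄₂ = λ₁λ₂ and λ̄₃ = λ₃ (with λ̄₄ arbitrary), for every choice of a,b,c,d; in particular the quasi-convergence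 class [g] is exactly a 2-parameter family. -/
/-! The product `A B` is conserved and `C` is constant, so `B = k / A` with `k = λ₁ λ₂`.
Then `D' = 3 + k / A² → 3` gives `D ~ 3 t`, and `(A²)' = 2 k / D` gives `A² ~ (2 k / 3) log t`,
both by l'Hôpital's rule at infinity. Hence `Ā / A` and `B̄ / B` tend to `√(k̄ / k)`, `D̄ / D → 1`
and `A / D → 0`, so the quantity tends to `2 (1 - √(k̄ / k))² + ((λ₃ - λ̄₃) / λ₃)²`. -/

open Filter Set Topology Real

theorem eventually_div_lt_of_eventually_deriv_div_lt {f g f' g' : ℝ → ℝ} {u b : ℝ}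
    (hf : ∀ᶠ x in atTop, HasDerivAt f (f' x) x) (hg : ∀ᶠ x in atTop, HasDerivAt g (g' x) x)
    (hg' : ∀ᶠ x in atTop, 0 < g' x) (hg_top : Tendsto g atTop atTop)
    (hu : ∀ᶠ x in atTop, f' x / g' x < u) (hub : u < b) :
    ∀ᶠ x in atTop, f x / g x < b := by
  obtain ⟨T, hT⟩ := eventually_atTop.1 (hf.and (hg.and (hg'.and hu)))
  have hanti : AntitoneOn (fun x => f x - u * g x) (Ici T) := by
    refine antitoneOn_of_hasDerivWithinAt_nonpos (convex_Ici T) (f' := fun x => f' x - u * g' x)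
      (fun x hx => ?_) (fun x hx => ?_) (fun x hx => ?_)
    · exact ((hT x hx).1.sub ((hT x hx).2.1.const_mul u)).continuousAt.continuousWithinAt
    · rw [interior_Ici] at hx ⊢
      exact ((hT x hx.le).1.sub ((hT x hx.le).2.1.const_mul u)).hasDerivWithinAt
    · rw [interior_Ici] at hx
      obtain ⟨-, -, hg'x, hux⟩ := hT x hx.le
      have := (div_lt_iff₀ hg'x).1 hux
      linarith
  have hconst : Tendsto (fun x => (f T - u * g T) / g x) atTop (𝓝 0) :=
    tendsto_const_nhds.div_atTop hg_top
  filter_upwards [eventually_ge_atTop T, hconst.eventually (gt_mem_nhds (sub_pos.2 hub)),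
    hg_top.eventually_gt_atTop 0] with x hxT hsmall hgx
  have hfx : f x - u * g x ≤ f T - u * g T := hanti self_mem_Ici hxT hxT
  rw [div_lt_iff₀ hgx] at hsmall ⊢
  linarith

theorem lhopital_atTop_of_tendsto_atTop {f g f' g' : ℝ → ℝ} {L : ℝ}
    (hf : ∀ᶠ x in atTop, HasDerivAt f (f' x) x) (hg : ∀ᶠ x in atTop, HasDerivAt g (g' x) x)
    (hg' : ∀ᶠ x in atTop, 0 < g' x) (hg_top : Tendsto g atTop atTop)
    (hlim : Tendsto (fun x => f' x / g' x) atTop (𝓝 L)) :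
    Tendsto (fun x => f x / g x) atTop (𝓝 L) := by
  refine tendsto_order.2 ⟨fun a ha => ?_, fun b hb => ?_⟩
  · obtain ⟨u, hau, huL⟩ := exists_between ha
    have hneg : ∀ᶠ x in atTop, -f' x / g' x < -u := by
      filter_upwards [hlim.eventually (lt_mem_nhds huL)] with x hx
      rw [neg_div]
      exact neg_lt_neg hx
    have := eventually_div_lt_of_eventually_deriv_div_lt (hf.mono fun x hx => hx.neg) hg hg'
      hg_top hneg (neg_lt_neg hau)
    filter_upwards [this] with x hx
    rwa [Pi.neg_apply, neg_div, neg_lt_neg_iff] at hx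
  · obtain ⟨u, hLu, hub⟩ := exists_between hb
    exact eventually_div_lt_of_eventually_deriv_div_lt hf hg hg' hg_top
      (hlim.eventually (gt_mem_nhds hLu)) hub

theorem eventually_hasDerivAt_of_hasDerivWithinAt_Ici {f f' : ℝ → ℝ} {a : ℝ}
    (hf : ∀ t ∈ Ici a, HasDerivWithinAt f (f' t) (Ici a) t) :
    ∀ᶠ t in atTop, HasDerivAt f (f' t) t := by
  filter_upwards [eventually_gt_atTop a] with t ht
  exact (hf t ht.le).hasDerivAt (Ici_mem_nhds ht)

theorem eqOn_Ici_of_hasDerivWithinAt_zero {f : ℝ → ℝ} {a : ℝ}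
    (hf : ∀ t ∈ Ici a, HasDerivWithinAt f 0 (Ici a) t) : ∀ t ∈ Ici a, f t = f a := fun t ht =>
  constant_of_has_deriv_right_zero
    (fun x hx => ((hf x hx.1).continuousWithinAt).mono Icc_subset_Ici_self)
    (fun x hx => (hf x hx.1).mono (Ici_subset_Ici.2 hx.1)) t (right_mem_Icc.2 ht)

/-- The fourth component `C` of the flow is constant and decouples from `A, B, D`. -/
structure IsA5RicciFlow (A B D : ℝ → ℝ) : Prop where
  pos_A : ∀ t ∈ Ici (0:ℝ), 0 < A t
  pos_B_zero : 0 < B 0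
  deriv_A : ∀ t ∈ Ici (0:ℝ), HasDerivWithinAt A (B t / D t) (Ici 0) t
  deriv_B : ∀ t ∈ Ici (0:ℝ), HasDerivWithinAt B (-(B t) ^ 2 / (A t * D t)) (Ici 0) t
  deriv_D : ∀ t ∈ Ici (0:ℝ), HasDerivWithinAt D (3 + B t / A t) (Ici 0) t
  tendsto_A : Tendsto A atTop atTop

namespace IsA5RicciFlow

variable {A B D A' B' D' : ℝ → ℝ}

theorem mul_eq (h : IsA5RicciFlow A B D) : ∀ t ∈ Ici (0:ℝ), A t * B t = A 0 * B 0 :=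
  eqOn_Ici_of_hasDerivWithinAt_zero (f := fun t => A t * B t) fun t ht => by
    have hAB := (h.deriv_A t ht).fun_mul (h.deriv_B t ht)
    rwa [← mul_div_assoc, mul_div_mul_left _ _ (h.pos_A t ht).ne', div_mul_eq_mul_div,
      ← sq, neg_div, add_neg_cancel] at hAB

theorem mul_pos (h : IsA5RicciFlow A B D) : 0 < A 0 * B 0 :=
  _root_.mul_pos (h.pos_A 0 self_mem_Ici) h.pos_B_zero

theorem pos_B (h : IsA5RicciFlow A B D) : ∀ t ∈ Ici (0:ℝ), 0 < B t := fun t ht =>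
  pos_of_mul_pos_right (h.mul_eq t ht ▸ h.mul_pos) (h.pos_A t ht).le

theorem tendsto_B (h : IsA5RicciFlow A B D) : Tendsto B atTop (𝓝 0) := by
  refine (tendsto_const_nhds (x := A 0 * B 0).div_atTop h.tendsto_A).congr' ?_
  filter_upwards [eventually_ge_atTop 0] with t ht
  rw [← h.mul_eq t ht, mul_div_cancel_left₀ _ (h.pos_A t ht).ne']

theorem tendsto_D_div_id (h : IsA5RicciFlow A B D) :
    Tendsto (fun t => D t / t) atTop (𝓝 3) := by
  refine lhopital_atTop_of_tendsto_atTop (eventually_hasDerivAt_of_hasDerivWithinAt_Ici h.deriv_D)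
    (.of_forall hasDerivAt_id) (.of_forall fun _ => one_pos) tendsto_id ?_
  simpa using tendsto_const_nhds.add (h.tendsto_B.div_atTop h.tendsto_A)

theorem tendsto_D (h : IsA5RicciFlow A B D) : Tendsto D atTop atTop := by
  refine (h.tendsto_D_div_id.pos_mul_atTop three_pos tendsto_id).congr' ?_
  filter_upwards [eventually_gt_atTop 0] with t ht
  exact div_mul_cancel₀ _ ht.ne'

theorem tendsto_sq_div_log (h : IsA5RicciFlow A B D) :
    Tendsto (fun t => A t ^ 2 / log t) atTop (𝓝 (2 * (A 0 * B 0) / 3)) := by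
  refine lhopital_atTop_of_tendsto_atTop (f' := fun t => 2 * A t * (B t / D t))
    ((eventually_hasDerivAt_of_hasDerivWithinAt_Ici h.deriv_A).mono fun t ht => by
      simpa using ht.fun_pow 2)
    ((eventually_gt_atTop 0).mono fun t ht => hasDerivAt_log ht.ne')
    ((eventually_gt_atTop 0).mono fun t ht => inv_pos.2 ht) tendsto_log_atTop ?_
  -- `(A²)' / log' = 2 A B t / D`, and `A B` is conserved
  have hlim := (h.tendsto_D_div_id.inv₀ three_ne_zero).const_mul (2 * (A 0 * B 0))
  rw [← div_eq_mul_inv] at hlim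
  refine hlim.congr' ?_
  filter_upwards [eventually_gt_atTop 0] with t ht
  rw [← h.mul_eq t ht.le]
  field_simp

theorem tendsto_A_div_D (h : IsA5RicciFlow A B D) :
    Tendsto (fun t => A t / D t) atTop (𝓝 0) := by
  -- `A / D = (A² / log t) (log t / t) (t / D) A⁻¹`
  have hlim := ((h.tendsto_sq_div_log.mul isLittleO_log_id_atTop.tendsto_div_nhds_zero).mul
    (h.tendsto_D_div_id.inv₀ three_ne_zero)).mul (tendsto_inv_atTop_zero.comp h.tendsto_A)
  simp only [mul_zero, zero_mul] at hlim
  refine hlim.congr' ?_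
  filter_upwards [eventually_gt_atTop 1, eventually_ge_atTop 0] with t ht ht0
  have := log_pos ht
  have := (h.pos_A t ht0).ne'
  simp only [Function.comp, id, inv_div]
  field_simp

theorem tendsto_A_div_A (h : IsA5RicciFlow A B D) (h' : IsA5RicciFlow A' B' D') :
    Tendsto (fun t => A' t / A t) atTop (𝓝 √(A' 0 * B' 0 / (A 0 * B 0))) := by
  have hsq := h'.tendsto_sq_div_log.div h.tendsto_sq_div_log (by linarith [h.mul_pos])
  rw [div_div_div_cancel_right₀ three_ne_zero, mul_div_mul_left _ _ two_ne_zero] at hsq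
  refine hsq.sqrt.congr' ?_
  filter_upwards [eventually_gt_atTop 1, eventually_ge_atTop 0] with t ht ht0
  rw [Pi.div_apply, div_div_div_cancel_right₀ (log_pos ht).ne', ← div_pow,
    sqrt_sq (div_nonneg (h'.pos_A t ht0).le (h.pos_A t ht0).le)]

theorem tendsto_B_div_B (h : IsA5RicciFlow A B D) (h' : IsA5RicciFlow A' B' D') :
    Tendsto (fun t => B' t / B t) atTop (𝓝 √(A' 0 * B' 0 / (A 0 * B 0))) := by
  have hr := h.tendsto_A_div_A h'
  have hlim := (hr.inv₀ (sqrt_pos.2 (div_pos h'.mul_pos h.mul_pos)).ne').const_mul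
    (A' 0 * B' 0 / (A 0 * B 0))
  rw [← div_eq_mul_inv, div_sqrt] at hlim
  refine hlim.congr' ?_
  filter_upwards [eventually_ge_atTop 0] with t ht
  have := (h.pos_A t ht).ne'
  have := (h'.pos_A t ht).ne'
  rw [← h.mul_eq t ht, ← h'.mul_eq t ht]
  field_simp

theorem tendsto_D_div_D (h : IsA5RicciFlow A B D) (h' : IsA5RicciFlow A' B' D') :
    Tendsto (fun t => D' t / D t) atTop (𝓝 1) := by
  have hlim := h'.tendsto_D_div_id.div h.tendsto_D_div_id three_ne_zero
  rw [div_self three_ne_zero] at hlim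
  refine hlim.congr' ?_
  filter_upwards [eventually_gt_atTop 0] with t ht
  exact div_div_div_cancel_right₀ ht.ne' _ _

theorem tendsto_normSq_sub (h : IsA5RicciFlow A B D) (h' : IsA5RicciFlow A' B' D')
    {C C' : ℝ → ℝ} {γ γ' : ℝ} (hC : ∀ᶠ t in atTop, C t = γ) (hC' : ∀ᶠ t in atTop, C' t = γ')
    (a b c d : ℝ) :
    Tendsto (fun t : ℝ =>
        ((A t - A' t - a ^ 2 * B' t) / A t) ^ 2 +
        ((B t - B' t) / B t) ^ 2 +
        ((C t - C' t) / C t) ^ 2 +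
        ((b ^ 2 * A' t + c ^ 2 * B' t + d ^ 2 * C' t + D' t - D t) / D t) ^ 2 +
        2 * (a * B' t) ^ 2 / (A t * B t) +
        2 * (b * A' t + a * c * B' t) ^ 2 / (A t * D t) +
        2 * (c * B' t) ^ 2 / (B t * D t) +
        2 * (d * C' t) ^ 2 / (C t * D t))
      atTop (𝓝 (2 * (1 - √(A' 0 * B' 0 / (A 0 * B 0))) ^ 2 + ((γ - γ') / γ) ^ 2)) := by
  have hr := h.tendsto_A_div_A h'
  have hB'B := h.tendsto_B_div_B h'
  have hB'A : Tendsto (fun t => B' t / A t) atTop (𝓝 0) := h'.tendsto_B.div_atTop h.tendsto_A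
  have hB'D : Tendsto (fun t => B' t / D t) atTop (𝓝 0) := h'.tendsto_B.div_atTop h.tendsto_D
  have hBD : Tendsto (fun t => B t / D t) atTop (𝓝 0) := h.tendsto_B.div_atTop h.tendsto_D
  have hinvD : Tendsto (fun t => (D t)⁻¹) atTop (𝓝 0) := tendsto_inv_atTop_zero.comp h.tendsto_D
  refine Tendsto.congr' (f₁ := fun t =>
      (1 - A' t / A t - a ^ 2 * (B' t / A t)) ^ 2 + (1 - B' t / B t) ^ 2 + ((γ - γ') / γ) ^ 2 +
      (b ^ 2 * (A' t / A t * (A t / D t)) + c ^ 2 * (B' t / D t) + d ^ 2 * γ' * (D t)⁻¹ +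
        D' t / D t - 1) ^ 2 +
      2 * (a * B' t) ^ 2 / (A 0 * B 0) +
      2 * (b * (A' t / A t) + a * c * (B' t / A t)) ^ 2 * (A t / D t) +
      2 * c ^ 2 * (B' t / B t) ^ 2 * (B t / D t) +
      2 * (d * γ') ^ 2 / γ * (D t)⁻¹) ?_ ?_
  · filter_upwards [eventually_ge_atTop 0, hC, hC', h.tendsto_D.eventually_gt_atTop 0]
      with t ht hCt hC't hDt
    have := (h.pos_A t ht).ne'
    have := (h.pos_B t ht).ne'
    rw [hCt, hC't, ← h.mul_eq t ht]
    field_simp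
  · convert (((((((((tendsto_const_nhds.sub hr).sub (tendsto_const_nhds.mul hB'A)).pow 2).add
      ((tendsto_const_nhds.sub hB'B).pow 2)).add tendsto_const_nhds).add
      ((((((tendsto_const_nhds.mul (hr.mul h.tendsto_A_div_D)).add
        (tendsto_const_nhds.mul hB'D)).add (tendsto_const_nhds.mul hinvD)).add
        (h.tendsto_D_div_D h')).sub tendsto_const_nhds).pow 2)).add
      ((((tendsto_const_nhds.mul h'.tendsto_B).pow 2).const_mul 2).div_const _)).add
      (((((tendsto_const_nhds.mul hr).add (tendsto_const_nhds.mul hB'A)).pow 2).const_mul 2).mul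
        h.tendsto_A_div_D)).add
      (((hB'B.pow 2).const_mul _).mul hBD)).add
      (hinvD.const_mul _) using 2
    ring

end IsA5RicciFlow

theorem two_mul_sq_one_sub_sqrt_add_sq_eq_zero_iff {p q γ γ' : ℝ} (hp : 0 < p) (hγ : γ ≠ 0) :
    2 * (1 - √(q / p)) ^ 2 + ((γ - γ') / γ) ^ 2 = 0 ↔ q = p ∧ γ' = γ := by
  rw [add_eq_zero_iff_of_nonneg (by positivity) (by positivity), mul_eq_zero_iff_left two_ne_zero,
    sq_eq_zero_iff, sq_eq_zero_iff, sub_eq_zero, eq_comm, sqrt_eq_one, div_eq_one_iff_eq hp.ne',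
    div_eq_zero_iff, or_iff_left hγ, sub_eq_zero, eq_comm (a := γ)]

theorem stmt_6_general (l1 l2 l3 m1 m2 m3 a b c d : ℝ)
    (A B C D Ab Bb Cb Db : ℝ → ℝ)
    (hApos : ∀ t ∈ Set.Ici (0:ℝ), 0 < A t) (hBpos : ∀ t ∈ Set.Ici (0:ℝ), 0 < B t)
    (hCpos : ∀ t ∈ Set.Ici (0:ℝ), 0 < C t)
    (hAbpos : ∀ t ∈ Set.Ici (0:ℝ), 0 < Ab t) (hBbpos : ∀ t ∈ Set.Ici (0:ℝ), 0 < Bb t)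
    (hA : ∀ t ∈ Set.Ici (0:ℝ), HasDerivWithinAt A (B t / D t) (Set.Ici 0) t)
    (hB : ∀ t ∈ Set.Ici (0:ℝ),
      HasDerivWithinAt B (-(B t) ^ 2 / (A t * D t)) (Set.Ici 0) t)
    (hC : ∀ t ∈ Set.Ici (0:ℝ), HasDerivWithinAt C 0 (Set.Ici 0) t)
    (hD : ∀ t ∈ Set.Ici (0:ℝ), HasDerivWithinAt D (3 + B t / A t) (Set.Ici 0) t)
    (hA0 : A 0 = l1) (hB0 : B 0 = l2) (hC0 : C 0 = l3)
    (hAlim : Filter.Tendsto A Filter.atTop Filter.atTop)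
    (hAb : ∀ t ∈ Set.Ici (0:ℝ), HasDerivWithinAt Ab (Bb t / Db t) (Set.Ici 0) t)
    (hBb : ∀ t ∈ Set.Ici (0:ℝ),
      HasDerivWithinAt Bb (-(Bb t) ^ 2 / (Ab t * Db t)) (Set.Ici 0) t)
    (hCb : ∀ t ∈ Set.Ici (0:ℝ), HasDerivWithinAt Cb 0 (Set.Ici 0) t)
    (hDb : ∀ t ∈ Set.Ici (0:ℝ), HasDerivWithinAt Db (3 + Bb t / Ab t) (Set.Ici 0) t)
    (hAb0 : Ab 0 = m1) (hBb0 : Bb 0 = m2) (hCb0 : Cb 0 = m3)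
    (hAblim : Filter.Tendsto Ab Filter.atTop Filter.atTop) :
    Filter.Tendsto (fun t : ℝ =>
        ((A t - Ab t - a ^ 2 * Bb t) / A t) ^ 2 +
        ((B t - Bb t) / B t) ^ 2 +
        ((C t - Cb t) / C t) ^ 2 +
        ((b ^ 2 * Ab t + c ^ 2 * Bb t + d ^ 2 * Cb t + Db t - D t) / D t) ^ 2 +
        2 * (a * Bb t) ^ 2 / (A t * B t) +
        2 * (b * Ab t + a * c * Bb t) ^ 2 / (A t * D t) +
        2 * (c * Bb t) ^ 2 / (B t * D t) +
        2 * (d * Cb t) ^ 2 / (C t * D t))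
      Filter.atTop (nhds 0) ↔ (m1 * m2 = l1 * l2 ∧ m3 = l3) := by
  have hF : IsA5RicciFlow A B D := ⟨hApos, hBpos 0 self_mem_Ici, hA, hB, hD, hAlim⟩
  have hFb : IsA5RicciFlow Ab Bb Db := ⟨hAbpos, hBbpos 0 self_mem_Ici, hAb, hBb, hDb, hAblim⟩
  have hlim := hF.tendsto_normSq_sub hFb
    ((eventually_ge_atTop 0).mono fun t ht => (eqOn_Ici_of_hasDerivWithinAt_zero hC t ht).trans hC0)
    ((eventually_ge_atTop 0).mono fun t ht => (eqOn_Ici_of_hasDerivWithinAt_zero hCb t ht).trans hCb0)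
    a b c d
  have hk : 0 < l1 * l2 := hA0 ▸ hB0 ▸ hF.mul_pos
  rw [hA0, hB0, hAb0, hBb0] at hlim
  rw [← two_mul_sq_one_sub_sqrt_add_sq_eq_zero_iff hk (hC0 ▸ (hCpos 0 self_mem_Ici).ne')]
  exact ⟨tendsto_nhds_unique hlim, fun hzero => hzero ▸ hlim⟩

/-- class A5, different frames: quasi-convergence holds iff
`λ̄₁λ̄₂ = λ₁λ₂` and `λ̄₃ = λ₃`, for every choice of `a,b,c,d`;
`[g]` is a 2-parameter family. -/
theorem stmt_6 (l1 l2 l3 l4 m1 m2 m3 m4 a b c d : ℝ)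
    (hl1 : 0 < l1) (hl2 : 0 < l2) (hl3 : 0 < l3) (hl4 : 0 < l4)
    (hm1 : 0 < m1) (hm2 : 0 < m2) (hm3 : 0 < m3) (hm4 : 0 < m4)
    (A B C D Ab Bb Cb Db : ℝ → ℝ)
    (hApos : ∀ t ∈ Set.Ici (0:ℝ), 0 < A t) (hBpos : ∀ t ∈ Set.Ici (0:ℝ), 0 < B t)
    (hCpos : ∀ t ∈ Set.Ici (0:ℝ), 0 < C t) (hDpos : ∀ t ∈ Set.Ici (0:ℝ), 0 < D t)
    (hAbpos : ∀ t ∈ Set.Ici (0:ℝ), 0 < Ab t) (hBbpos : ∀ t ∈ Set.Ici (0:ℝ), 0 < Bb t)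
    (hCbpos : ∀ t ∈ Set.Ici (0:ℝ), 0 < Cb t) (hDbpos : ∀ t ∈ Set.Ici (0:ℝ), 0 < Db t)
    (hA : ∀ t ∈ Set.Ici (0:ℝ), HasDerivWithinAt A (B t / D t) (Set.Ici 0) t)
    (hB : ∀ t ∈ Set.Ici (0:ℝ),
      HasDerivWithinAt B (-(B t) ^ 2 / (A t * D t)) (Set.Ici 0) t)
    (hC : ∀ t ∈ Set.Ici (0:ℝ), HasDerivWithinAt C 0 (Set.Ici 0) t)
    (hD : ∀ t ∈ Set.Ici (0:ℝ), HasDerivWithinAt D (3 + B t / A t) (Set.Ici 0) t)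
    (hA0 : A 0 = l1) (hB0 : B 0 = l2) (hC0 : C 0 = l3) (hD0 : D 0 = l4)
    (hAlim : Filter.Tendsto A Filter.atTop Filter.atTop)
    (hDlim : Filter.Tendsto D Filter.atTop Filter.atTop)
    (hAb : ∀ t ∈ Set.Ici (0:ℝ), HasDerivWithinAt Ab (Bb t / Db t) (Set.Ici 0) t)
    (hBb : ∀ t ∈ Set.Ici (0:ℝ),
      HasDerivWithinAt Bb (-(Bb t) ^ 2 / (Ab t * Db t)) (Set.Ici 0) t)
    (hCb : ∀ t ∈ Set.Ici (0:ℝ), HasDerivWithinAt Cb 0 (Set.Ici 0) t)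
    (hDb : ∀ t ∈ Set.Ici (0:ℝ), HasDerivWithinAt Db (3 + Bb t / Ab t) (Set.Ici 0) t)
    (hAb0 : Ab 0 = m1) (hBb0 : Bb 0 = m2) (hCb0 : Cb 0 = m3) (hDb0 : Db 0 = m4)
    (hAblim : Filter.Tendsto Ab Filter.atTop Filter.atTop)
    (hDblim : Filter.Tendsto Db Filter.atTop Filter.atTop) :
    Filter.Tendsto (fun t : ℝ =>
        ((A t - Ab t - a ^ 2 * Bb t) / A t) ^ 2 +
        ((B t - Bb t) / B t) ^ 2 +
        ((C t - Cb t) / C t) ^ 2 +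
        ((b ^ 2 * Ab t + c ^ 2 * Bb t + d ^ 2 * Cb t + Db t - D t) / D t) ^ 2 +
        2 * (a * Bb t) ^ 2 / (A t * B t) +
        2 * (b * Ab t + a * c * Bb t) ^ 2 / (A t * D t) +
        2 * (c * Bb t) ^ 2 / (B t * D t) +
        2 * (d * Cb t) ^ 2 / (C t * D t))
      Filter.atTop (nhds 0) ↔ (m1 * m2 = l1 * l2 ∧ m3 = l3) :=
  stmt_6_general l1 l2 l3 m1 m2 m3 a b c d A B C D Ab Bb Cb Db hApos hBpos hCpos hAbpos hBbpos hA hB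
    hC hD hA0 hB0 hC0 hAlim hAb hBb hCb hDb hAb0 hBb0 hCb0 hAblim
end

section
/- Let a₂, a₂' ∈ (-1,1), set b = a₂ - a₂', and let a,c,d be arbitrary real numbers. Let λ₁,λ₂,λ₄ and λ̄₁,λ̄₂,λ̄₄ be positive reals, and for t ≥ 0 define A(t)=λ₁+4t, B(t)=(λ₂³+3(1-a₂²)λ₂λ₄t)^{1/3}, C(t)=B(t)/(1-a₂²), D(t)=λ₂λ₄(λ₂³+3(1-a₂²)λ₂λ₄t)^{-1/3}, and define Ā(t)=λ̄₁+4t, B̄(t)=(λ̄₂³+3(1-a₂'²)λ̄₂λ̄₄t)^{1/3}, C̄(t)=B̄(t)/(1-a₂'²), D̄(t)=λ̄₂λ̄₄(λ̄₂³+3(1-a₂'²)λ̄₂λ̄₄t)^{-1/3}. Then the quantity ((A-Ā-a²B̄-c²C̄-d²D̄)/A)² + ((B-B̄-b²C̄-a²D̄)/B)² + ((C-C̄)/C)² + ((D-D̄)/D)² + 2(aB̄+bcC̄-adD̄)²/(AB) + 2(cC̄)²/(AC) + 2(dD̄)²/(AD) + 2(bC̄)²/(BC) + 2(aD̄)²/(BD)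 tends to 0 as t → ∞ if and only if a₂' = a₂ and λ̄₂λ̄₄ = λ₂λ₄; in particular the quasi-convergence class [g] is exactly a 2-parameter family. -/
open Filter Real Topology

/-! Substituting `C = B / (1 - a₂²)`, `D = λ₂λ₄ / B` and their barred analogues turns the
quantity into a rational function of `(A - Ā) / A`, `B / A`, `B̄ / B` and `B⁻²`, continuous
wherever `B̄ / B ≠ 0`. Along the flow all of these tend to `0` except `B̄ / B`, which tends to
the cube root `r` of the ratio of the two growth rates, so the quantity converges to a sum of
four squares. It vanishes iff `b = 0` (from the `(b C̄)² / (B C)` term), then `r = 1`,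
`C̄ / C → 1` and `D̄ / D → 1`, which together force `a₂' = a₂` and `λ̄₂λ̄₄ = λ₂λ₄`. -/

theorem tendsto_affine_div_affine (p q u v : ℝ) (hv : 0 < v) :
    Tendsto (fun t : ℝ => (p + q * t) / (u + v * t)) atTop (𝓝 (q / v)) := by
  have hlim : Tendsto (fun t : ℝ => (p * t⁻¹ + q) / (u * t⁻¹ + v)) atTop
      (𝓝 ((p * 0 + q) / (u * 0 + v))) :=
    ((tendsto_inv_atTop_zero.const_mul p).add_const q).div
      ((tendsto_inv_atTop_zero.const_mul u).add_const v) (by simpa using hv.ne')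
  rw [mul_zero, mul_zero, zero_add, zero_add] at hlim
  refine hlim.congr' ?_
  filter_upwards [eventually_gt_atTop 0] with t ht
  field_simp

theorem tendsto_affine_atTop (p : ℝ) {k : ℝ} (hk : 0 < k) :
    Tendsto (fun t : ℝ => p + k * t) atTop atTop :=
  tendsto_atTop_add_const_left _ p (tendsto_id.const_mul_atTop hk)

theorem tendsto_affine_rpow_div_affine_rpow (p p' e : ℝ) {k k' : ℝ} (hk : 0 < k)
    (hk' : 0 < k') :
    Tendsto (fun t : ℝ => (p' + k' * t) ^ e / (p + k * t) ^ e) atTop (𝓝 ((k' / k) ^ e)) := by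
  refine ((continuousAt_rpow_const _ e (Or.inl (div_pos hk' hk).ne')).tendsto.comp
    (tendsto_affine_div_affine p' k' p k hk)).congr' ?_
  filter_upwards [(tendsto_affine_atTop p hk).eventually_ge_atTop 0,
    (tendsto_affine_atTop p' hk').eventually_ge_atTop 0] with t ht ht'
  exact div_rpow ht' ht e

theorem tendsto_affine_rpow_div_affine_zero (p q : ℝ) {e k h : ℝ} (he : e < 1)
    (hk : 0 < k) (hh : 0 < h) :
    Tendsto (fun t : ℝ => (p + k * t) ^ e / (q + h * t)) atTop (𝓝 0) := by
  have hdecay : Tendsto (fun t : ℝ => (p + k * t) ^ (-(1 - e))) atTop (𝓝 0) :=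
    (tendsto_rpow_neg_atTop (by linarith)).comp (tendsto_affine_atTop p hk)
  have hlim := hdecay.mul (tendsto_affine_div_affine p k q h hh)
  rw [zero_mul] at hlim
  refine hlim.congr' ?_
  filter_upwards [(tendsto_affine_atTop p hk).eventually_gt_atTop 0] with t ht
  rw [neg_sub, rpow_sub ht, rpow_one]
  field_simp

theorem Filter.Tendsto.tendsto_nhds_iff_eq {α X : Type*} [TopologicalSpace X] [T2Space X]
    {f : α → X} {l : Filter α} [l.NeBot] {a b : X} (h : Tendsto f l (𝓝 a)) :
    Tendsto f l (𝓝 b) ↔ a = b :=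
  ⟨tendsto_nhds_unique h, fun hab => hab ▸ h⟩

noncomputable def normSqDiffLimit (b σ σ' κ κ' r : ℝ) : ℝ :=
  (1 - r - b ^ 2 * r / σ') ^ 2 + (1 - r * σ / σ') ^ 2 + (1 - κ' / (κ * r)) ^ 2 +
    2 * b ^ 2 * r ^ 2 * σ / σ' ^ 2

theorem normSqDiffLimit_eq_zero_iff {b σ σ' κ κ' r : ℝ} (hσ : 0 < σ) (hσ' : 0 < σ')
    (hκ : 0 < κ) (hr : 0 < r) :
    normSqDiffLimit b σ σ' κ κ' r = 0 ↔ b = 0 ∧ r = 1 ∧ σ' = σ ∧ κ' = κ := by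
  constructor
  · intro h
    have hlast : 0 ≤ 2 * b ^ 2 * r ^ 2 * σ / σ' ^ 2 := by positivity
    rw [normSqDiffLimit, add_eq_zero_iff_of_nonneg (by positivity) hlast,
      add_eq_zero_iff_of_nonneg (by positivity) (sq_nonneg _),
      add_eq_zero_iff_of_nonneg (sq_nonneg _) (sq_nonneg _)] at h
    obtain ⟨⟨⟨h₁, h₂⟩, h₃⟩, h₄⟩ := h
    obtain rfl : b = 0 := by simpa [hr.ne', hσ.ne', hσ'.ne'] using h₄
    simp only [zero_pow two_ne_zero, zero_mul, zero_div, sub_zero, pow_eq_zero_iff two_ne_zero,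
      sub_eq_zero] at h₁ h₂ h₃
    subst h₁
    rw [one_mul, eq_div_iff hσ'.ne', one_mul] at h₂
    rw [mul_one, eq_div_iff hκ.ne', one_mul] at h₃
    exact ⟨rfl, rfl, h₂, h₃.symm⟩
  · rintro ⟨rfl, rfl, rfl, rfl⟩
    simp [normSqDiffLimit, hσ.ne', hκ.ne']

theorem tendsto_normSqDiff {α : Type*} {l : Filter α} {A Ab B Bb C Cb D Db : α → ℝ}
    {a b c d σ σ' κ κ' r : ℝ} (hσ : σ ≠ 0) (hσ' : σ' ≠ 0) (hκ : κ ≠ 0) (hr : r ≠ 0)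
    (hA : Tendsto A l atTop) (hAb : Tendsto (fun t => (A t - Ab t) / A t) l (𝓝 0))
    (hB : Tendsto B l atTop) (hBA : Tendsto (fun t => B t / A t) l (𝓝 0))
    (hBb : Tendsto (fun t => Bb t / B t) l (𝓝 r))
    (hC : C =ᶠ[l] fun t => B t / σ) (hCb : Cb =ᶠ[l] fun t => Bb t / σ')
    (hD : D =ᶠ[l] fun t => κ / B t) (hDb : Db =ᶠ[l] fun t => κ' / Bb t) :
    Tendsto (fun t =>
        ((A t - Ab t - a ^ 2 * Bb t - c ^ 2 * Cb t - d ^ 2 * Db t) / A t) ^ 2 +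
        ((B t - Bb t - b ^ 2 * Cb t - a ^ 2 * Db t) / B t) ^ 2 +
        ((C t - Cb t) / C t) ^ 2 +
        ((D t - Db t) / D t) ^ 2 +
        2 * (a * Bb t + b * c * Cb t - a * d * Db t) ^ 2 / (A t * B t) +
        2 * (c * Cb t) ^ 2 / (A t * C t) +
        2 * (d * Db t) ^ 2 / (A t * D t) +
        2 * (b * Cb t) ^ 2 / (B t * C t) +
        2 * (a * Db t) ^ 2 / (B t * D t))
      l (𝓝 (normSqDiffLimit b σ σ' κ κ' r)) := by
  -- the quantity in the variables `u = (A - Ab) / A`, `v = B / A`, `ρ = Bb / B`, `w = B⁻²`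
  let G : ℝ × ℝ × ℝ × ℝ → ℝ := fun ⟨u, v, ρ, w⟩ =>
    (u - a ^ 2 * ρ * v - c ^ 2 * ρ * v / σ' - d ^ 2 * κ' * v * w / ρ) ^ 2 +
    (1 - ρ - b ^ 2 * ρ / σ' - a ^ 2 * κ' * w / ρ) ^ 2 + (1 - ρ * σ / σ') ^ 2 +
    (1 - κ' / (κ * ρ)) ^ 2 + 2 * (a * ρ + b * c * ρ / σ' - a * d * κ' * w / ρ) ^ 2 * v +
    2 * c ^ 2 * ρ ^ 2 * σ / σ' ^ 2 * v + 2 * d ^ 2 * κ' ^ 2 / (ρ ^ 2 * κ) * v * w +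
    2 * b ^ 2 * ρ ^ 2 * σ / σ' ^ 2 + 2 * a ^ 2 * κ' ^ 2 / (ρ ^ 2 * κ) * w
  have hG : ContinuousAt G (0, 0, r, 0) := by
    fun_prop (disch := simp [hr, hκ, hσ'])
  have hw : Tendsto (fun t => (B t ^ 2)⁻¹) l (𝓝 0) :=
    ((tendsto_pow_atTop two_ne_zero).comp hB).inv_tendsto_atTop
  have hlim := hG.tendsto.comp (hAb.prodMk_nhds (hBA.prodMk_nhds (hBb.prodMk_nhds hw)))
  have hval : G (0, 0, r, 0) = normSqDiffLimit b σ σ' κ κ' r := by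
    simp only [G, normSqDiffLimit]; ring
  rw [hval] at hlim
  refine hlim.congr' ?_
  filter_upwards [hC, hCb, hD, hDb, hA.eventually_gt_atTop 0, hB.eventually_gt_atTop 0,
    hBb.eventually_ne hr] with t hCt hCbt hDt hDbt hAt hBt hρt
  have hBbt : Bb t ≠ 0 := left_ne_zero_of_mul (by simpa [div_eq_mul_inv] using hρt)
  simp only [Function.comp, G, hCt, hCbt, hDt, hDbt]
  field_simp

theorem stmt_12_general (a2 a2' : ℝ) (ha2l : -1 < a2) (ha2r : a2 < 1)
    (ha2l' : -1 < a2') (ha2r' : a2' < 1)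
    (b : ℝ) (hb : b = a2 - a2') (a c d : ℝ)
    (l1 l2 l4 m1 m2 m4 : ℝ)
    (hl2 : 0 < l2) (hl4 : 0 < l4)
    (hm2 : 0 < m2) (hm4 : 0 < m4)
    (A B C D Ab Bb Cb Db : ℝ → ℝ)
    (hA : ∀ t : ℝ, A t = l1 + 4 * t)
    (hB : ∀ t : ℝ, B t = (l2 ^ 3 + 3 * (1 - a2 ^ 2) * l2 * l4 * t) ^ ((1:ℝ)/3))
    (hC : ∀ t : ℝ, C t = B t / (1 - a2 ^ 2))
    (hD : ∀ t : ℝ, D t = l2 * l4 * (l2 ^ 3 + 3 * (1 - a2 ^ 2) * l2 * l4 * t) ^ (-(1:ℝ)/3))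
    (hAb : ∀ t : ℝ, Ab t = m1 + 4 * t)
    (hBb : ∀ t : ℝ, Bb t = (m2 ^ 3 + 3 * (1 - a2' ^ 2) * m2 * m4 * t) ^ ((1:ℝ)/3))
    (hCb : ∀ t : ℝ, Cb t = Bb t / (1 - a2' ^ 2))
    (hDb : ∀ t : ℝ, Db t = m2 * m4 * (m2 ^ 3 + 3 * (1 - a2' ^ 2) * m2 * m4 * t) ^ (-(1:ℝ)/3)) :
    Filter.Tendsto (fun t : ℝ =>
        ((A t - Ab t - a ^ 2 * Bb t - c ^ 2 * Cb t - d ^ 2 * Db t) / A t) ^ 2 +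
        ((B t - Bb t - b ^ 2 * Cb t - a ^ 2 * Db t) / B t) ^ 2 +
        ((C t - Cb t) / C t) ^ 2 +
        ((D t - Db t) / D t) ^ 2 +
        2 * (a * Bb t + b * c * Cb t - a * d * Db t) ^ 2 / (A t * B t) +
        2 * (c * Cb t) ^ 2 / (A t * C t) +
        2 * (d * Db t) ^ 2 / (A t * D t) +
        2 * (b * Cb t) ^ 2 / (B t * C t) +
        2 * (a * Db t) ^ 2 / (B t * D t))
      Filter.atTop (nhds 0) ↔ (a2' = a2 ∧ m2 * m4 = l2 * l4) := by
  have hσ : 0 < 1 - a2 ^ 2 := by nlinarith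
  have hσ' : 0 < 1 - a2' ^ 2 := by nlinarith
  have hk : 0 < 3 * (1 - a2 ^ 2) * l2 * l4 := mul_pos (mul_pos (mul_pos three_pos hσ) hl2) hl4
  have hk' : 0 < 3 * (1 - a2' ^ 2) * m2 * m4 :=
    mul_pos (mul_pos (mul_pos three_pos hσ') hm2) hm4
  have hr : 0 < ((3 * (1 - a2' ^ 2) * m2 * m4) / (3 * (1 - a2 ^ 2) * l2 * l4)) ^ (1 / 3 : ℝ) :=
    rpow_pos_of_pos (div_pos hk' hk) _
  have hP := tendsto_affine_atTop (l2 ^ 3) hk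
  have hP' := tendsto_affine_atTop (m2 ^ 3) hk'
  have hAtop : Tendsto A atTop atTop := (tendsto_affine_atTop l1 four_pos).congr (hA · |>.symm)
  have hBtop : Tendsto B atTop atTop :=
    (tendsto_rpow_atTop (by norm_num)).comp hP |>.congr (hB · |>.symm)
  have hBA : Tendsto (fun t => B t / A t) atTop (𝓝 0) :=
    (tendsto_affine_rpow_div_affine_zero (l2 ^ 3) l1 (e := 1 / 3) (by norm_num) hk four_pos).congr
      fun t => by rw [hA, hB]
  have hD' : D =ᶠ[atTop] fun t => l2 * l4 / B t := by
    filter_upwards [hP.eventually_ge_atTop 0] with t ht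
    rw [hD, hB, neg_div, rpow_neg ht, ← div_eq_mul_inv]
  have hDb' : Db =ᶠ[atTop] fun t => m2 * m4 / Bb t := by
    filter_upwards [hP'.eventually_ge_atTop 0] with t ht
    rw [hDb, hBb, neg_div, rpow_neg ht, ← div_eq_mul_inv]
  have hlim := tendsto_normSqDiff (a := a) (b := b) (c := c) (d := d) (Ab := Ab)
    hσ.ne' hσ'.ne' (mul_pos hl2 hl4).ne' hr.ne' hAtop
    ((tendsto_const_nhds (x := l1 - m1)).div_atTop hAtop |>.congr fun t => by rw [hA, hAb]; ring)
    hBtop hBA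
    ((tendsto_affine_rpow_div_affine_rpow (l2 ^ 3) (m2 ^ 3) _ hk hk').congr
      fun t => by rw [hB, hBb])
    (.of_forall hC) (.of_forall hCb) hD' hDb'
  rw [hlim.tendsto_nhds_iff_eq, normSqDiffLimit_eq_zero_iff hσ hσ' (mul_pos hl2 hl4) hr]
  subst hb
  constructor
  · rintro ⟨hb, -, -, hκ⟩
    exact ⟨by linarith, hκ⟩
  · rintro ⟨rfl, hκ⟩
    refine ⟨sub_self _, ?_, rfl, hκ⟩
    rw [mul_assoc _ m2, hκ, ← mul_assoc, div_self hk.ne', one_rpow]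

/-- class A7ii, different frames: quasi-convergence holds iff
`a₂' = a₂` and `λ̄₂λ̄₄ = λ₂λ₄`; `[g]` is a 2-parameter family. -/
theorem stmt_12 (a2 a2' : ℝ) (ha2l : -1 < a2) (ha2r : a2 < 1)
    (ha2l' : -1 < a2') (ha2r' : a2' < 1)
    (b : ℝ) (hb : b = a2 - a2') (a c d : ℝ)
    (l1 l2 l4 m1 m2 m4 : ℝ)
    (hl1 : 0 < l1) (hl2 : 0 < l2) (hl4 : 0 < l4)
    (hm1 : 0 < m1) (hm2 : 0 < m2) (hm4 : 0 < m4)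
    (A B C D Ab Bb Cb Db : ℝ → ℝ)
    (hA : ∀ t : ℝ, A t = l1 + 4 * t)
    (hB : ∀ t : ℝ, B t = (l2 ^ 3 + 3 * (1 - a2 ^ 2) * l2 * l4 * t) ^ ((1:ℝ)/3))
    (hC : ∀ t : ℝ, C t = B t / (1 - a2 ^ 2))
    (hD : ∀ t : ℝ, D t = l2 * l4 * (l2 ^ 3 + 3 * (1 - a2 ^ 2) * l2 * l4 * t) ^ (-(1:ℝ)/3))
    (hAb : ∀ t : ℝ, Ab t = m1 + 4 * t)
    (hBb : ∀ t : ℝ, Bb t = (m2 ^ 3 + 3 * (1 - a2' ^ 2) * m2 * m4 * t) ^ ((1:ℝ)/3))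
    (hCb : ∀ t : ℝ, Cb t = Bb t / (1 - a2' ^ 2))
    (hDb : ∀ t : ℝ, Db t = m2 * m4 * (m2 ^ 3 + 3 * (1 - a2' ^ 2) * m2 * m4 * t) ^ (-(1:ℝ)/3)) :
    Filter.Tendsto (fun t : ℝ =>
        ((A t - Ab t - a ^ 2 * Bb t - c ^ 2 * Cb t - d ^ 2 * Db t) / A t) ^ 2 +
        ((B t - Bb t - b ^ 2 * Cb t - a ^ 2 * Db t) / B t) ^ 2 +
        ((C t - Cb t) / C t) ^ 2 +
        ((D t - Db t) / D t) ^ 2 +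
        2 * (a * Bb t + b * c * Cb t - a * d * Db t) ^ 2 / (A t * B t) +
        2 * (c * Cb t) ^ 2 / (A t * C t) +
        2 * (d * Db t) ^ 2 / (A t * D t) +
        2 * (b * Cb t) ^ 2 / (B t * C t) +
        2 * (a * Db t) ^ 2 / (B t * D t))
      Filter.atTop (nhds 0) ↔ (a2' = a2 ∧ m2 * m4 = l2 * l4) :=
  stmt_12_general a2 a2' ha2l ha2r ha2l' ha2r' b hb a c d l1 l2 l4 m1 m2 m4 hl2 hl4 hm2 hm4 A B C D
    Ab Bb Cb Db hA hB hC hD hAb hBb hCb hDb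
end
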